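/- arXiv:1106.3638 — 5 statements merged into one kernel-verified Lean document; each statement's English description precedes it below -/
import Mathlib

section
/- Let R be a Noetherian ring and T = ⊕_{n∈ℤ} T_n a ℤ-graded module over a graded ring with base ring R. If T is almost Artinian (i.e., there is a graded submodule N ⊆ T with N_n = 0 for all n ≪ 0 such that T/N is Artinian), then T is tame: there exists n₀ ∈ ℤ such that either T_n = 0 for all n ≤ n₀, or T_n ≠ 0 for all n ≤ n₀. -/
/-!
Let `P_m ⊆ T` be the `R`-submodule generated by the elements of degree `≤ m`. The images of the
`P_m` in the Artinian module `T/N` stabilise as `m → -∞`, so in low degrees every homogeneous `t`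
of degree `m + 1` is congruent modulo `N` to an element of `P_m`, and since `N` vanishes in low
degrees, `t` is the degree `m + 1` component of that element. As `R` is generated by `R_1`, if
`T_m = 0` then `R_1` maps degrees `≤ m - 1` into degrees `≤ m`, so the elements of degree `≤ m`
already form an `R`-submodule and `P_m` has nothing in degree `m + 1`; hence `T_{m+1} = 0`.
Vanishing therefore propagates upwards in low degrees, which is exactly tameness.
-/

open DirectSum

namespace DirectSum

theorem coe_decompose_smul_add_of_left_mem {ι R M σ σ' : Type*} [DecidableEq ι]
    [AddLeftCancelMonoid ι] [Monoid R] [AddCommMonoid M] [DistribMulAction R M]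
    [SetLike σ M] [AddSubmonoidClass σ M] [SetLike σ' R]
    (𝒜 : ι → σ') (ℳ : ι → σ) [SetLike.GradedSMul 𝒜 ℳ] [Decomposition ℳ]
    {i j : ι} {a : R} (ha : a ∈ 𝒜 i) (x : M) :
    (decompose ℳ (a • x) (i + j) : M) = a • (decompose ℳ x j : M) := by
  induction x using Decomposition.inductionOn ℳ with
  | zero => simp
  | @homogeneous k m =>
    have hm : a • (m : M) ∈ ℳ (i + k) := SetLike.GradedSMul.smul_mem ha m.2
    by_cases hkj : k = j
    · subst hkj
      rw [decompose_of_mem_same ℳ hm, decompose_coe, of_eq_same]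
    · rw [decompose_of_mem_ne ℳ hm (by simpa using hkj), decompose_coe,
        of_eq_of_ne _ _ _ (Ne.symm hkj), ZeroMemClass.coe_zero, smul_zero]
  | add x y hx hy =>
    simp only [smul_add, decompose_add, DirectSum.add_apply, AddMemClass.coe_add, hx, hy]

end DirectSum

theorem WellFoundedLT.exists_forall_le_eq_of_monotone {α : Type*} [PartialOrder α]
    [WellFoundedLT α] {f : ℤ → α} (hf : Monotone f) : ∃ n₀, ∀ n ≤ n₀, f n = f n₀ := by
  obtain ⟨k, hk⟩ := WellFoundedLT.antitone_chain_condition (f := fun k : ℕ ↦ f (-k))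
    fun a b hab ↦ hf (by omega)
  refine ⟨-k, fun n hn ↦ ?_⟩
  have := hk (-n).toNat (by omega)
  rwa [Int.toNat_of_nonneg (by omega), neg_neg, eq_comm] at this

theorem Int.exists_forall_or_forall_not_of_imp_succ {p : ℤ → Prop} (n₀ : ℤ)
    (h : ∀ m < n₀, p m → p (m + 1)) : ∃ n, (∀ k ≤ n, p k) ∨ (∀ k ≤ n, ¬ p k) := by
  by_cases hall : ∀ k ≤ n₀, p k
  · exact ⟨n₀, .inl hall⟩
  push Not at hall
  obtain ⟨m, hm, hpm⟩ := hall
  refine ⟨m, .inr fun k hk hpk ↦ hpm ?_⟩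
  clear hpm
  induction m, hk using Int.leInduction with
  | base => exact hpk
  | succ l hkl ih => exact h l (by omega) (ih (by omega))

theorem Submodule.smul_mem_of_adjoin_eq_top {R₀ R T : Type*} [CommSemiring R₀] [Semiring R]
    [Algebra R₀ R] [AddCommMonoid T] [Module R₀ T] [Module R T] [IsScalarTower R₀ R T]
    {s : Set R} (hs : Algebra.adjoin R₀ s = ⊤) (p : Submodule R₀ T)
    (hp : ∀ a ∈ s, ∀ x ∈ p, a • x ∈ p) (r : R) {x : T} (hx : x ∈ p) : r • x ∈ p := by
  have hr : r ∈ Algebra.adjoin R₀ s := hs ▸ Algebra.mem_top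
  induction hr using Algebra.adjoin_induction generalizing x with
  | mem a ha => exact hp a ha x hx
  | algebraMap c => rw [algebraMap_smul]; exact p.smul_mem c hx
  | add a b _ _ ha hb => rw [add_smul]; exact p.add_mem (ha hx) (hb hx)
  | mul a b _ _ ha hb => rw [mul_smul]; exact ha (hb hx)

section DegreeLE

variable {R₀ T : Type*} [Semiring R₀] [AddCommMonoid T] [Module R₀ T]
  (ℳ : ℤ → Submodule R₀ T) [Decomposition ℳ]

def degreeLE (m : ℤ) : Submodule R₀ T where
  carrier := {x | ∀ j, m < j → (decompose ℳ x j : T) = 0}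
  zero_mem' := by simp
  add_mem' hx hy j hj := by simp [hx j hj, hy j hj]
  smul_mem' c x hx j hj := by
    rw [decompose_smul, DirectSum.smul_apply, Submodule.coe_smul, hx j hj, smul_zero]

variable {ℳ}

theorem mem_degreeLE_of_mem {k m : ℤ} {x : T} (hx : x ∈ ℳ k) (hkm : k ≤ m) :
    x ∈ degreeLE ℳ m := fun j hj ↦ decompose_of_mem_ne ℳ hx (by omega)

theorem degreeLE_mono : Monotone (degreeLE ℳ) := fun _ _ hmn _ hx j hj ↦ hx j (by omega)

theorem mem_degreeLE_sub_one {m : ℤ} (hm : ℳ m = ⊥) {x : T} (hx : x ∈ degreeLE ℳ m) :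
    x ∈ degreeLE ℳ (m - 1) := by
  intro j hj
  obtain rfl | hmj := eq_or_lt_of_le (show m ≤ j by omega)
  · simpa [hm] using (decompose ℳ x m).2
  · exact hx j hmj

end DegreeLE

section GradedModule

variable {R₀ R T : Type*} [CommSemiring R₀] [Semiring R] [Algebra R₀ R] [AddCommMonoid T]
  [Module R₀ T] [Module R T] {𝒜 : ℤ → Submodule R₀ R}
  {ℳ : ℤ → Submodule R₀ T} [SetLike.GradedSMul 𝒜 ℳ] [Decomposition ℳ]

theorem smul_mem_degreeLE_add {i m : ℤ} {a : R} (ha : a ∈ 𝒜 i) {x : T}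
    (hx : x ∈ degreeLE ℳ m) : a • x ∈ degreeLE ℳ (i + m) := by
  intro j hj
  rw [show j = i + (j - i) by omega, coe_decompose_smul_add_of_left_mem 𝒜 ℳ ha,
    hx (j - i) (by omega), smul_zero]

theorem span_degreeLE_le_of_eq_bot [IsScalarTower R₀ R T]
    (hgen : Algebra.adjoin R₀ ((𝒜 1 : Submodule R₀ R) : Set R) = ⊤) {m : ℤ} (hm : ℳ m = ⊥) :
    (Submodule.span R (degreeLE ℳ m : Set T) : Set T) ⊆ degreeLE ℳ m := by
  have hstable : ∀ a ∈ ((𝒜 1 : Submodule R₀ R) : Set R), ∀ x ∈ degreeLE ℳ m,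
      a • x ∈ degreeLE ℳ m := fun a ha x hx ↦ by
    simpa using smul_mem_degreeLE_add ha (mem_degreeLE_sub_one hm hx)
  exact Submodule.span_le (p := { degreeLE ℳ m with
    smul_mem' := fun r x hx ↦ Submodule.smul_mem_of_adjoin_eq_top hgen _ hstable r hx }) |>.2
    le_rfl

theorem eq_bot_add_one_of_eq_bot [IsScalarTower R₀ R T]
    (hgen : Algebra.adjoin R₀ ((𝒜 1 : Submodule R₀ R) : Set R) = ⊤) {m : ℤ} (hm : ℳ m = ⊥)
    {N : Submodule R T}
    (hstab : Submodule.span R (degreeLE ℳ (m + 1) : Set T) ≤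
      N ⊔ Submodule.span R (degreeLE ℳ m : Set T))
    (hN : ∀ x ∈ N, (decompose ℳ x (m + 1) : T) = 0) : ℳ (m + 1) = ⊥ := by
  refine eq_bot_iff.2 fun t ht ↦ (Submodule.mem_bot R₀).2 ?_
  obtain ⟨y, hy, z, hz, rfl⟩ :=
    Submodule.mem_sup.1 (hstab (Submodule.subset_span (mem_degreeLE_of_mem ht le_rfl)))
  rw [← decompose_of_mem_same ℳ ht, decompose_add, DirectSum.add_apply, Submodule.coe_add,
    hN y hy, span_degreeLE_le_of_eq_bot hgen hm hz (m + 1) (lt_add_one m), add_zero]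

end GradedModule

theorem almostArtinian_tame_general
    (R₀ R : Type) [CommRing R₀] [CommRing R] [Algebra R₀ R]
    (𝒜 : ℤ → Submodule R₀ R)
    (hhomog : Algebra.adjoin R₀ ((𝒜 1 : Submodule R₀ R) : Set R) = ⊤)
    (T : Type) [AddCommGroup T] [Module R₀ T] [Module R T] [IsScalarTower R₀ R T]
    (ℳ : ℤ → Submodule R₀ T) [SetLike.GradedSMul 𝒜 ℳ] [DirectSum.Decomposition ℳ]
    -- `T` is almost Artinian:
    (N : Submodule R T)
    (hNvanish : ∃ n₁ : ℤ, ∀ n ≤ n₁, ∀ m ∈ N, (DirectSum.decompose ℳ m n : T) = 0)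
    (hArt : IsArtinian R (T ⧸ N)) :
    -- `T` is tame:
    ∃ n₀ : ℤ, (∀ n ≤ n₀, ℳ n = ⊥) ∨ (∀ n ≤ n₀, ℳ n ≠ ⊥) := by
  obtain ⟨n₁, hN⟩ := hNvanish
  obtain ⟨n₂, hn₂⟩ := WellFoundedLT.exists_forall_le_eq_of_monotone
    (f := fun m ↦ (Submodule.span R (degreeLE ℳ m : Set T)).map N.mkQ)
    fun _ _ h ↦ Submodule.map_mono (Submodule.span_mono (degreeLE_mono h))
  refine Int.exists_forall_or_forall_not_of_imp_succ (min n₁ n₂) fun m hm hbot ↦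
    eq_bot_add_one_of_eq_bot hhomog hbot ?_ (hN (m + 1) (by omega))
  rw [← Submodule.comap_map_mkQ, ← Submodule.map_le_iff_le_comap, hn₂ m (by omega),
    hn₂ (m + 1) (by omega)]

theorem almostArtinian_tame
    (R₀ R : Type) [CommRing R₀] [CommRing R] [Algebra R₀ R]
    [IsNoetherianRing R]
    (𝒜 : ℤ → Submodule R₀ R) [GradedAlgebra 𝒜]
    (hneg : ∀ n : ℤ, n < 0 → 𝒜 n = ⊥)
    (hbase : 𝒜 0 = (1 : Submodule R₀ R))
    (hhomog : Algebra.adjoin R₀ ((𝒜 1 : Submodule R₀ R) : Set R) = ⊤)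
    (T : Type) [AddCommGroup T] [Module R₀ T] [Module R T] [IsScalarTower R₀ R T]
    (ℳ : ℤ → Submodule R₀ T) [SetLike.GradedSMul 𝒜 ℳ] [DirectSum.Decomposition ℳ]
    -- `T` is almost Artinian:
    (N : Submodule R T)
    (hNgraded : ∀ m ∈ N, ∀ n : ℤ, (DirectSum.decompose ℳ m n : T) ∈ N)
    (hNvanish : ∃ n₁ : ℤ, ∀ n ≤ n₁, ∀ m ∈ N, (DirectSum.decompose ℳ m n : T) = 0)
    (hArt : IsArtinian R (T ⧸ N)) :
    -- `T` is tame: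
    ∃ n₀ : ℤ, (∀ n ≤ n₀, ℳ n = ⊥) ∨ (∀ n ≤ n₀, ℳ n ≠ ⊥) :=
  almostArtinian_tame_general R₀ R 𝒜 hhomog T ℳ N hNvanish hArt
end

section
/- A graded module T over a Noetherian homogeneous graded ring that is the sum of an Artinian graded submodule and a Noetherian graded submodule is almost Artinian, and moreover the property of being almost Artinian passes to graded subquotients: any graded submodule and any graded quotient of an almost Artinian graded module is almost Artinian. -/
/-!
STATEMENT 1: Over a Noetherian homogeneous graded ring, a graded module which
is the sum of an Artinian graded submodule and a Noetherian graded submodule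
is almost Artinian; moreover almost Artinian-ness passes to graded submodules
and graded quotients.  (Almost Artinian: there is a graded submodule `N` with
`N_n = 0` for `n ≪ 0` and Artinian quotient.)

A graded submodule `P` of `T`, as a graded module in its own right, is almost
Artinian iff there is a graded submodule `N ≤ P` with components vanishing in
all small degrees such that `P/N` is Artinian; a graded quotient `T/P` is
almost Artinian iff there is a graded submodule `N' ⊇ P` whose components lie
in `P` in all small degrees, with `T/N'` Artinian.  We use these descriptions
(via the correspondence of graded submodules) to avoid constructing gradings
on subquotients.
-/

/-- `N` is a graded submodule with respect to the grading `ℳ`. -/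
def IsGradedSubmodule {R₀ R T : Type} [CommRing R₀] [CommRing R] [AddCommGroup T]
    [Module R₀ T] [Module R T]
    (ℳ : ℤ → Submodule R₀ T) [DirectSum.Decomposition ℳ] (N : Submodule R T) : Prop :=
  ∀ m ∈ N, ∀ n : ℤ, (DirectSum.decompose ℳ m n : T) ∈ N

/-- The graded module `T` (with grading `ℳ`) is almost Artinian. -/
def IsAlmostArtinian (R₀ R T : Type) [CommRing R₀] [CommRing R] [AddCommGroup T]
    [Module R₀ T] [Module R T]
    (ℳ : ℤ → Submodule R₀ T) [DirectSum.Decomposition ℳ] : Prop :=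
  ∃ N : Submodule R T, IsGradedSubmodule ℳ N ∧
    (∃ n₁ : ℤ, ∀ n ≤ n₁, ∀ m ∈ N, (DirectSum.decompose ℳ m n : T) = 0) ∧
    IsArtinian R (T ⧸ N)

/-!
Multiplication by the nonnegatively graded ring `R` never lowers degrees, so a finitely generated
graded module lives in degrees bounded below. In the first part one may therefore take `N = B`:
`T ⧸ B` is a quotient of the Artinian module `A` because `A ⊔ B = ⊤`. For a graded submodule or
quotient by `P`, the witness `N` of `T` is replaced by `N ⊓ P`, respectively `N ⊔ P`.
-/

open DirectSum

namespace IsGradedSubmodule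

variable {R₀ R T : Type} [CommRing R₀] [CommRing R] [AddCommGroup T] [Module R₀ T] [Module R T]
  {ℳ : ℤ → Submodule R₀ T} [Decomposition ℳ] {N P : Submodule R T}

theorem inf (hN : IsGradedSubmodule ℳ N) (hP : IsGradedSubmodule ℳ P) :
    IsGradedSubmodule ℳ (N ⊓ P) :=
  fun m hm n => ⟨hN m hm.1 n, hP m hm.2 n⟩

theorem sup (hN : IsGradedSubmodule ℳ N) (hP : IsGradedSubmodule ℳ P) :
    IsGradedSubmodule ℳ (N ⊔ P) := by
  intro m hm n
  obtain ⟨a, ha, b, hb, rfl⟩ := Submodule.mem_sup.mp hm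
  rw [decompose_add, DirectSum.add_apply, Submodule.coe_add]
  exact Submodule.add_mem_sup (hN a ha n) (hP b hb n)

end IsGradedSubmodule

section NonnegGrading

variable {R₀ R T : Type} [CommRing R₀] [CommRing R] [Module R₀ R]
  [AddCommGroup T] [Module R₀ T] [Module R T]
  {𝒜 : ℤ → Submodule R₀ R} [Decomposition 𝒜] {ℳ : ℤ → Submodule R₀ T} [Decomposition ℳ]
  [SetLike.GradedSMul 𝒜 ℳ]

theorem decompose_smul_eq_zero_of_mem_of_lt (hneg : ∀ n : ℤ, n < 0 → 𝒜 n = ⊥) (r : R)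
    {i n : ℤ} {x : T} (hx : x ∈ ℳ i) (hn : n < i) :
    (decompose ℳ (r • x) n : T) = 0 := by
  induction r using Decomposition.inductionOn 𝒜 with
  | zero => simp
  | @homogeneous j a =>
    rcases lt_or_ge j 0 with hj | hj
    · have ha : (a : R) = 0 := (Submodule.mem_bot R₀).mp (hneg j hj ▸ a.2)
      simp [ha]
    · exact decompose_of_mem_ne ℳ (SetLike.GradedSMul.smul_mem a.2 hx)
        (by rw [vadd_eq_add]; omega)
  | add r s hr hs => rw [add_smul, decompose_add, DirectSum.add_apply, Submodule.coe_add, hr, hs, add_zero]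

theorem decompose_smul_eq_zero_of_forall_lt (hneg : ∀ n : ℤ, n < 0 → 𝒜 n = ⊥) (r : R)
    {d : ℤ} {m : T} (hm : ∀ n < d, (decompose ℳ m n : T) = 0) {n : ℤ} (hn : n < d) :
    (decompose ℳ (r • m) n : T) = 0 := by
  classical
  rw [← sum_support_decompose ℳ m, Finset.smul_sum, decompose_sum, DFinsupp.finsetSum_apply,
    Submodule.coe_sum]
  refine Finset.sum_eq_zero fun i hi => decompose_smul_eq_zero_of_mem_of_lt hneg r
    (decompose ℳ m i).2 ?_
  by_contra! hid
  exact DFinsupp.mem_support_iff.mp hi (Subtype.ext (hm i (by omega)))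

theorem exists_decompose_eq_zero_of_fg (hneg : ∀ n : ℤ, n < 0 → 𝒜 n = ⊥) {B : Submodule R T}
    (hB : B.FG) : ∃ d : ℤ, ∀ m ∈ B, ∀ n < d, (decompose ℳ m n : T) = 0 := by
  classical
  obtain ⟨s, rfl⟩ := hB
  obtain ⟨d, hd⟩ := (s.biUnion fun x => (decompose ℳ x).support).bddBelow
  refine ⟨d, fun m hm => ?_⟩
  induction hm using Submodule.span_induction with
  | mem x hx =>
    intro n hn
    by_contra h
    have hsupp : n ∈ s.biUnion fun x => (decompose ℳ x).support :=
      Finset.mem_biUnion.mpr ⟨x, hx, DFinsupp.mem_support_iff.mpr fun h' => h (by simp [h'])⟩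
    exact (hd hsupp).not_gt hn
  | zero => simp
  | add x y _ _ hx hy =>
    intro n hn
    rw [decompose_add, DirectSum.add_apply, Submodule.coe_add, hx n hn, hy n hn, add_zero]
  | smul r x _ hx => exact fun n hn => decompose_smul_eq_zero_of_forall_lt hneg r hx hn

end NonnegGrading

section Artinian

variable {R M : Type} [Ring R] [AddCommGroup M] [Module R M]

theorem isArtinian_quotient_of_sup_eq_top {A B : Submodule R M} [hA : IsArtinian R A]
    (h : A ⊔ B = ⊤) : IsArtinian R (M ⧸ B) :=
  isArtinian_of_surjective A (B.mkQ ∘ₗ A.subtype) <| by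
    rw [← LinearMap.range_eq_top, LinearMap.range_comp, Submodule.range_subtype,
      Submodule.map_mkQ_eq_top, sup_comm, h]

theorem isArtinian_quotient_comap_subtype {N : Submodule R M} [IsArtinian R (M ⧸ N)]
    (P : Submodule R M) : IsArtinian R (P ⧸ N.comap P.subtype) := by
  have hker : LinearMap.ker (N.mkQ ∘ₗ P.subtype) = N.comap P.subtype := by
    rw [LinearMap.ker_comp, Submodule.ker_mkQ]
  rw [← hker]
  exact isArtinian_of_linearEquiv (N.mkQ ∘ₗ P.subtype).quotKerEquivRange.symm

end Artinian

theorem almostArtinian_of_sum_and_subquotients_general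
    (R₀ R : Type) [CommRing R₀] [CommRing R] [Algebra R₀ R]
    (𝒜 : ℤ → Submodule R₀ R) [GradedAlgebra 𝒜]
    (hneg : ∀ n : ℤ, n < 0 → 𝒜 n = ⊥)
    (T : Type) [AddCommGroup T] [Module R₀ T] [Module R T]
    (ℳ : ℤ → Submodule R₀ T) [SetLike.GradedSMul 𝒜 ℳ] [DirectSum.Decomposition ℳ] :
    -- (a) sum of an Artinian and a Noetherian graded submodule ⟹ almost Artinian
    ((∀ A B : Submodule R T, IsGradedSubmodule ℳ A → IsGradedSubmodule ℳ B →
        IsArtinian R A → B.FG → A ⊔ B = ⊤ →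
        IsAlmostArtinian R₀ R T ℳ)
    -- (b) graded submodules of an almost Artinian module are almost Artinian
    ∧ (IsAlmostArtinian R₀ R T ℳ → ∀ P : Submodule R T, IsGradedSubmodule ℳ P →
        ∃ N : Submodule R T, N ≤ P ∧ IsGradedSubmodule ℳ N ∧
          (∃ n₁ : ℤ, ∀ n ≤ n₁, ∀ m ∈ N, (DirectSum.decompose ℳ m n : T) = 0) ∧
          IsArtinian R (↥P ⧸ (N.comap P.subtype)))
    -- (c) graded quotients of an almost Artinian module are almost Artinian
    ∧ (IsAlmostArtinian R₀ R T ℳ → ∀ P : Submodule R T, IsGradedSubmodule ℳ P →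
        ∃ N' : Submodule R T, P ≤ N' ∧ IsGradedSubmodule ℳ N' ∧
          (∃ n₁ : ℤ, ∀ n ≤ n₁, ∀ m ∈ N', (DirectSum.decompose ℳ m n : T) ∈ P) ∧
          IsArtinian R (T ⧸ N'))) := by
  refine ⟨fun A B _ hBg hA hBfg hsum => ?_, ?_, ?_⟩
  · obtain ⟨d, hd⟩ := exists_decompose_eq_zero_of_fg (ℳ := ℳ) hneg hBfg
    exact ⟨B, hBg, ⟨d - 1, fun n hn m hm => hd m hm n (by omega)⟩,
      isArtinian_quotient_of_sup_eq_top (hA := hA) hsum⟩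
  · rintro ⟨N, hNg, ⟨n₁, hn₁⟩, hN⟩ P hPg
    refine ⟨N ⊓ P, inf_le_right, hNg.inf hPg, ⟨n₁, fun n hn m hm => hn₁ n hn m hm.1⟩, ?_⟩
    rw [Submodule.comap_inf, Submodule.comap_subtype_self, inf_top_eq]
    exact isArtinian_quotient_comap_subtype P
  · rintro ⟨N, hNg, ⟨n₁, hn₁⟩, hN⟩ P hPg
    refine ⟨N ⊔ P, le_sup_right, hNg.sup hPg, ⟨n₁, fun n hn m hm => ?_⟩,
      isArtinian_of_surjective _ (Submodule.factor le_sup_left) (Submodule.factor_surjective _)⟩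
    obtain ⟨a, ha, b, hb, rfl⟩ := Submodule.mem_sup.mp hm
    rw [decompose_add, DirectSum.add_apply, Submodule.coe_add, hn₁ n hn a ha, zero_add]
    exact hPg b hb n

theorem almostArtinian_of_sum_and_subquotients
    (R₀ R : Type) [CommRing R₀] [CommRing R] [Algebra R₀ R]
    [IsNoetherianRing R]
    (𝒜 : ℤ → Submodule R₀ R) [GradedAlgebra 𝒜]
    (hneg : ∀ n : ℤ, n < 0 → 𝒜 n = ⊥)
    (hbase : 𝒜 0 = (1 : Submodule R₀ R))
    (hhomog : Algebra.adjoin R₀ ((𝒜 1 : Submodule R₀ R) : Set R) = ⊤)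
    (T : Type) [AddCommGroup T] [Module R₀ T] [Module R T] [IsScalarTower R₀ R T]
    (ℳ : ℤ → Submodule R₀ T) [SetLike.GradedSMul 𝒜 ℳ] [DirectSum.Decomposition ℳ] :
    -- (a) sum of an Artinian and a Noetherian graded submodule ⟹ almost Artinian
    ((∀ A B : Submodule R T, IsGradedSubmodule ℳ A → IsGradedSubmodule ℳ B →
        IsArtinian R A → B.FG → A ⊔ B = ⊤ →
        IsAlmostArtinian R₀ R T ℳ)
    -- (b) graded submodules of an almost Artinian module are almost Artinian
    ∧ (IsAlmostArtinian R₀ R T ℳ → ∀ P : Submodule R T, IsGradedSubmodule ℳ P →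
        ∃ N : Submodule R T, N ≤ P ∧ IsGradedSubmodule ℳ N ∧
          (∃ n₁ : ℤ, ∀ n ≤ n₁, ∀ m ∈ N, (DirectSum.decompose ℳ m n : T) = 0) ∧
          IsArtinian R (↥P ⧸ (N.comap P.subtype)))
    -- (c) graded quotients of an almost Artinian module are almost Artinian
    ∧ (IsAlmostArtinian R₀ R T ℳ → ∀ P : Submodule R T, IsGradedSubmodule ℳ P →
        ∃ N' : Submodule R T, P ≤ N' ∧ IsGradedSubmodule ℳ N' ∧
          (∃ n₁ : ℤ, ∀ n ≤ n₁, ∀ m ∈ N', (DirectSum.decompose ℳ m n : T) ∈ P) ∧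
          IsArtinian R (T ⧸ N'))) :=
  almostArtinian_of_sum_and_subquotients_general R₀ R 𝒜 hneg T ℳ
end

section
/- Let R = ⊕_{n≥0} R_n be a Noetherian homogeneous ring, M a finitely generated graded R-module, i ∈ ℕ₀, and suppose there is an integer n^i(M) and a finite set 𝔓 ⊆ Spec(R_0) consisting of primes of height ≤ 2 such that for all n ≤ n^i(M) the set of associated primes of height ≤ 2 of H^i_{R_+}(M)_n equals 𝔓. Then for every n ≤ n^i(M), the set of primes of height ≤ 3 in Supp_{R_0}(H^i_{R_+}(M)_n) not lying in the closure of 𝔓 equals the set of primes of height exactly 3 in Ass_{R_0}(H^i_{R_+}(M)_n) not lying in the closure of 𝔓. -/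
/-!
A prime `p` in the support of a finitely generated module over a Noetherian ring contains a minimal
prime of the support, which is associated. If `p` avoids the closure of `𝔓`, that associated prime
is not in `𝔓`, so by hypothesis its height exceeds `2`; as `height p ≤ 3`, it must be `p` itself,
of height exactly `3`.
-/

namespace Module

variable {R M : Type*} [CommRing R] [AddCommGroup M] [Module R M] [Module.Finite R M]

theorem mem_support_of_mem_associatedPrimes {p : PrimeSpectrum R}
    (hp : p.asIdeal ∈ associatedPrimes R M) : p ∈ support R M :=
  mem_support_iff_of_finite.mpr <| Submodule.annihilator_top.symm.trans_le hp.annihilator_le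

theorem exists_mem_associatedPrimes_le_of_mem_support [IsNoetherianRing R] {p : PrimeSpectrum R}
    (hp : p ∈ support R M) : ∃ q : PrimeSpectrum R, q.asIdeal ∈ associatedPrimes R M ∧ q ≤ p := by
  obtain ⟨q, hq, hqp⟩ := Ideal.exists_minimalPrimes_le (mem_support_iff_of_finite.mp hp)
  exact ⟨⟨q, hq.1.1⟩,
    associatedPrimes.minimalPrimes_annihilator_subset_associatedPrimes R M hq, hqp⟩

end Module

namespace Order

theorem eq_and_height_eq_of_le_of_lt_height {α : Type*} [PartialOrder α] {p q : α} (k : ℕ)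
    (hqp : q ≤ p) (hp : height p ≤ k + 1) (hq : k < height q) :
    q = p ∧ height p = k + 1 := by
  have hq' : k + 1 ≤ height q := (ENat.add_one_le_iff (ENat.natCast_ne_top k)).mpr hq
  have hq_fin : height q < ⊤ := (height_mono hqp).trans_lt (hp.trans_lt (by simp))
  refine ⟨hqp.eq_of_not_lt fun hlt ↦ ?_, hp.antisymm (hq'.trans (height_mono hqp))⟩
  exact (height_strictMono hlt hq_fin).not_ge (hp.trans hq')

end Order

theorem supp_minus_closure_eq_ass_general
    (R₀ : Type) [CommRing R₀] [IsNoetherianRing R₀]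
    (T : ℤ → Type) [∀ n, AddCommGroup (T n)] [∀ n, Module R₀ (T n)]
    [∀ n, Module.Finite R₀ (T n)]
    (nᵢ : ℤ) (𝔓 : Set (PrimeSpectrum R₀))
    (hAss : ∀ n : ℤ, n ≤ nᵢ →
      {p : PrimeSpectrum R₀ |
        p.asIdeal ∈ associatedPrimes R₀ (T n) ∧ Order.height p ≤ (2 : ℕ∞)} = 𝔓) :
    ∀ n : ℤ, n ≤ nᵢ →
      {p : PrimeSpectrum R₀ | p ∈ Module.support R₀ (T n) ∧
          Order.height p ≤ (3 : ℕ∞) ∧ ¬ (∃ q ∈ 𝔓, q ≤ p)}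
        = {p : PrimeSpectrum R₀ | p.asIdeal ∈ associatedPrimes R₀ (T n) ∧
            Order.height p = (3 : ℕ∞) ∧ ¬ (∃ q ∈ 𝔓, q ≤ p)} := by
  intro n hn
  ext p
  constructor
  · rintro ⟨hsupp, hp3, hclosure⟩
    obtain ⟨q, hqAss, hqp⟩ := Module.exists_mem_associatedPrimes_le_of_mem_support hsupp
    have hq2 : 2 < Order.height q := lt_of_not_ge fun hq2 ↦
      hclosure ⟨q, hAss n hn ▸ ⟨hqAss, hq2⟩, hqp⟩
    obtain ⟨rfl, hp3⟩ := Order.eq_and_height_eq_of_le_of_lt_height 2 hqp hp3 hq2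
    exact ⟨hqAss, hp3, hclosure⟩
  · rintro ⟨hpAss, hp3, hclosure⟩
    exact ⟨Module.mem_support_of_mem_associatedPrimes hpAss, hp3.le, hclosure⟩

theorem supp_minus_closure_eq_ass
    (R₀ : Type) [CommRing R₀] [IsNoetherianRing R₀]
    (T : ℤ → Type) [∀ n, AddCommGroup (T n)] [∀ n, Module R₀ (T n)]
    [∀ n, Module.Finite R₀ (T n)]
    (nᵢ : ℤ) (𝔓 : Set (PrimeSpectrum R₀)) (h𝔓fin : 𝔓.Finite)
    (h𝔓ht : ∀ p ∈ 𝔓, Order.height p ≤ (2 : ℕ∞))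
    (hAss : ∀ n : ℤ, n ≤ nᵢ →
      {p : PrimeSpectrum R₀ |
        p.asIdeal ∈ associatedPrimes R₀ (T n) ∧ Order.height p ≤ (2 : ℕ∞)} = 𝔓) :
    ∀ n : ℤ, n ≤ nᵢ →
      {p : PrimeSpectrum R₀ | p ∈ Module.support R₀ (T n) ∧
          Order.height p ≤ (3 : ℕ∞) ∧ ¬ (∃ q ∈ 𝔓, q ≤ p)}
        = {p : PrimeSpectrum R₀ | p.asIdeal ∈ associatedPrimes R₀ (T n) ∧
            Order.height p = (3 : ℕ∞) ∧ ¬ (∃ q ∈ 𝔓, q ≤ p)} :=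
  supp_minus_closure_eq_ass_general R₀ T nᵢ 𝔓 hAss
end

section
/- Let R = ⊕_{n≥0} R_n be a Noetherian homogeneous ring and M a finitely generated graded R-module. If there exists an integer m such that Ass_{R_0}(M_n) is independent of n for all n ≥ m (equal to a set Ass*), then the set NZD*(M) of quasi-non-zero divisors on M, i.e., elements x ∈ R_0 that are non-zero divisors on M_n for all n ≫ 0, equals R_0 \ ⋃_{𝔭 ∈ Ass*} 𝔭. -/
open Filter

/-!
Over a Noetherian ring the zero divisors on a module are exactly the union of its associated
primes. So for every `n ≥ m₀`, being a non-zero divisor on `M_n` is the same condition on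
`x ∈ R₀`, namely avoiding every prime of `Ass*`.
-/

theorem Submodule.isSMulRegular_iff_smul_eq_zero_imp_eq_zero {R M : Type*} [Ring R]
    [AddCommGroup M] [Module R M] (N : Submodule R M) {r : R} :
    IsSMulRegular N r ↔ ∀ m ∈ N, r • m = 0 → m = 0 := by
  simp only [isSMulRegular_iff_right_eq_zero_of_smul, Subtype.forall, ← Submodule.coe_eq_zero,
    Submodule.coe_smul]

theorem isSMulRegular_iff_forall_notMem_associatedPrimes {R M : Type*} [CommRing R]
    [IsNoetherianRing R] [AddCommGroup M] [Module R M] {r : R} :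
    IsSMulRegular M r ↔ ∀ p ∈ associatedPrimes R M, r ∉ p := by
  simpa using (Set.ext_iff.mp (biUnion_associatedPrimes_eq_compl_regular R M) r).not.symm

theorem quasi_nonzerodivisors_eq_compl_union_assStar_general
    (R₀ : Type) [CommRing R₀]
    [IsNoetherianRing R₀]
    (M : Type) [AddCommGroup M] [Module R₀ M]
    (ℳ : ℤ → Submodule R₀ M)
    (m₀ : ℤ) (AssStar : Set (Ideal R₀))
    (hAss : ∀ n : ℤ, m₀ ≤ n → associatedPrimes R₀ (ℳ n) = AssStar) :
    {x : R₀ | ∃ n₀ : ℤ, ∀ n : ℤ, n₀ ≤ n →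
        ∀ m ∈ ℳ n, x • m = (0 : M) → m = 0}
      = {x : R₀ | ∀ 𝔭 ∈ AssStar, x ∉ 𝔭} := by
  ext x
  have hregular : ∀ᶠ n in atTop, IsSMulRegular (ℳ n) x ↔ ∀ 𝔭 ∈ AssStar, x ∉ 𝔭 :=
    eventually_atTop.2
      ⟨m₀, fun n hn => hAss n hn ▸ isSMulRegular_iff_forall_notMem_associatedPrimes⟩
  simpa only [Set.mem_ofPred_eq, ← Submodule.isSMulRegular_iff_smul_eq_zero_imp_eq_zero,
    ← eventually_atTop] using (eventually_congr hregular).trans eventually_const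

theorem quasi_nonzerodivisors_eq_compl_union_assStar
    (R₀ R : Type) [CommRing R₀] [CommRing R] [Algebra R₀ R]
    [IsNoetherianRing R₀] [IsNoetherianRing R]
    (𝒜 : ℤ → Submodule R₀ R) [GradedAlgebra 𝒜]
    (hneg : ∀ n : ℤ, n < 0 → 𝒜 n = ⊥)
    (hbase : 𝒜 0 = (1 : Submodule R₀ R))
    (hhomog : Algebra.adjoin R₀ ((𝒜 1 : Submodule R₀ R) : Set R) = ⊤)
    (M : Type) [AddCommGroup M] [Module R₀ M] [Module R M] [IsScalarTower R₀ R M]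
    [Module.Finite R M]
    (ℳ : ℤ → Submodule R₀ M) [SetLike.GradedSMul 𝒜 ℳ] [DirectSum.Decomposition ℳ]
    (m₀ : ℤ) (AssStar : Set (Ideal R₀))
    (hAss : ∀ n : ℤ, m₀ ≤ n → associatedPrimes R₀ (ℳ n) = AssStar) :
    {x : R₀ | ∃ n₀ : ℤ, ∀ n : ℤ, n₀ ≤ n →
        ∀ m ∈ ℳ n, x • m = (0 : M) → m = 0}
      = {x : R₀ | ∀ 𝔭 ∈ AssStar, x ∉ 𝔭} :=
  quasi_nonzerodivisors_eq_compl_union_assStar_general R₀ M ℳ m₀ AssStar hAss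
end

section
/- Let R_0 be a Noetherian ring and (T_n)_{n≤0} a family of finitely generated R_0-modules such that the sets Ass_{R_0}(T_n) are eventually (for n ≪ 0) contained in ⋃_{m ≤ n₁} Ass_{R_0}(T_m) for fixed bounds and such that Ass_{R_0}(T_n)^{≤2} = 𝔓 for all n ≤ n^i, with 𝔓 finite. If every prime in the critical set C = ⋃_{n ≤ n^i} (Supp(T_n) \ closure(𝔓))^{≤3} is contained in Ass_{R_0}(T_{n'}) for some fixed n' ≤ n^i whenever it lies in Supp(T_n) for all n ≤ n', then: if C is finite, the set {𝔭 of height ≤ 3 : 𝔭-tameness fails for (T_n)} is finite and contained in C. -/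
/-!
A prime `𝔭` at which tameness fails lies in `Supp(T n)` for some `n ≤ nI` and outside `Supp(T m)`
for some `m ≤ nI`. Associated primes lie in the support and supports are stable under
specialization, so no prime of `𝔓 = Ass(T m)^{≤2}` lies below `𝔭`; hence `𝔭 ∈ C`.
-/

lemma Module.mem_support_of_isAssociatedPrime {R M : Type*} [CommRing R] [AddCommGroup M]
    [Module R M] {p : PrimeSpectrum R} (hp : IsAssociatedPrime p.asIdeal M) :
    p ∈ Module.support R M := by
  obtain ⟨-, x, hx⟩ := hp
  refine Module.mem_support_iff_exists_annihilator.mpr ⟨x, ?_⟩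
  rw [hx, Submodule.bot_colon']
  exact Ideal.le_radical

lemma exists_le_and_exists_le_not_of_not_eventually_constant {ι : Type*} [LE ι] {P : ι → Prop}
    (h : ¬ ∃ n₀, (∀ n ≤ n₀, P n) ∨ ∀ n ≤ n₀, ¬ P n) (N : ι) :
    (∃ n ≤ N, P n) ∧ ∃ n ≤ N, ¬ P n := by
  push Not at h
  exact (h N).symm

theorem tameness_fails_only_on_critical_set_general
    (R₀ : Type) [CommRing R₀]
    (T : ℤ → Type) [∀ n, AddCommGroup (T n)] [∀ n, Module R₀ (T n)]
    (nI : ℤ)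
    (𝔓 : Set (PrimeSpectrum R₀))
    (h𝔓 : ∀ n : ℤ, n ≤ nI →
      {p : PrimeSpectrum R₀ |
        p.asIdeal ∈ associatedPrimes R₀ (T n) ∧ Order.height p ≤ (2 : ℕ∞)} = 𝔓)
    (C : Set (PrimeSpectrum R₀))
    (hC : C = ⋃ n ∈ {n : ℤ | n ≤ nI},
      {p : PrimeSpectrum R₀ | p ∈ Module.support R₀ (T n) ∧
        ¬ (∃ q ∈ 𝔓, q ≤ p) ∧ Order.height p ≤ (3 : ℕ∞)})
    (hCfin : C.Finite) :
    {p : PrimeSpectrum R₀ | Order.height p ≤ (3 : ℕ∞) ∧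
        ¬ (∃ n₀ : ℤ, (∀ n : ℤ, n ≤ n₀ → p ∈ Module.support R₀ (T n)) ∨
            (∀ n : ℤ, n ≤ n₀ → p ∉ Module.support R₀ (T n)))}.Finite ∧
    {p : PrimeSpectrum R₀ | Order.height p ≤ (3 : ℕ∞) ∧
        ¬ (∃ n₀ : ℤ, (∀ n : ℤ, n ≤ n₀ → p ∈ Module.support R₀ (T n)) ∨
            (∀ n : ℤ, n ≤ n₀ → p ∉ Module.support R₀ (T n)))} ⊆ C := by
  have hcritical : {p : PrimeSpectrum R₀ | Order.height p ≤ (3 : ℕ∞) ∧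
      ¬ (∃ n₀ : ℤ, (∀ n : ℤ, n ≤ n₀ → p ∈ Module.support R₀ (T n)) ∨
        (∀ n : ℤ, n ≤ n₀ → p ∉ Module.support R₀ (T n)))} ⊆ C := by
    rintro p ⟨hheight, hnot_tame⟩
    obtain ⟨⟨n, hn, hmem⟩, m, hm, hnot_mem⟩ :=
      exists_le_and_exists_le_not_of_not_eventually_constant hnot_tame nI
    have hnot_above : ¬ ∃ q ∈ 𝔓, q ≤ p := by
      rintro ⟨q, hq, hqp⟩
      rw [← h𝔓 m hm] at hq
      exact hnot_mem (Module.mem_support_mono hqp (Module.mem_support_of_isAssociatedPrime hq.1))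
    rw [hC]
    exact Set.mem_biUnion hn ⟨hmem, hnot_above, hheight⟩
  exact ⟨hCfin.subset hcritical, hcritical⟩

theorem tameness_fails_only_on_critical_set
    (R₀ : Type) [CommRing R₀] [IsNoetherianRing R₀]
    (T : ℤ → Type) [∀ n, AddCommGroup (T n)] [∀ n, Module R₀ (T n)]
    [∀ n, Module.Finite R₀ (T n)]
    (n₁ nI : ℤ)
    (hAssBound : ∃ n₂ : ℤ, ∀ n : ℤ, n ≤ n₂ →
      associatedPrimes R₀ (T n) ⊆ ⋃ m ∈ {m : ℤ | m ≤ n₁}, associatedPrimes R₀ (T m))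
    (𝔓 : Set (PrimeSpectrum R₀)) (h𝔓fin : 𝔓.Finite)
    (h𝔓 : ∀ n : ℤ, n ≤ nI →
      {p : PrimeSpectrum R₀ |
        p.asIdeal ∈ associatedPrimes R₀ (T n) ∧ Order.height p ≤ (2 : ℕ∞)} = 𝔓)
    (C : Set (PrimeSpectrum R₀))
    (hC : C = ⋃ n ∈ {n : ℤ | n ≤ nI},
      {p : PrimeSpectrum R₀ | p ∈ Module.support R₀ (T n) ∧
        ¬ (∃ q ∈ 𝔓, q ≤ p) ∧ Order.height p ≤ (3 : ℕ∞)})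
    (hCass : ∃ n' : ℤ, n' ≤ nI ∧ ∀ p ∈ C,
      (∀ n : ℤ, n ≤ n' → p ∈ Module.support R₀ (T n)) →
        p.asIdeal ∈ associatedPrimes R₀ (T n'))
    (hCfin : C.Finite) :
    {p : PrimeSpectrum R₀ | Order.height p ≤ (3 : ℕ∞) ∧
        ¬ (∃ n₀ : ℤ, (∀ n : ℤ, n ≤ n₀ → p ∈ Module.support R₀ (T n)) ∨
            (∀ n : ℤ, n ≤ n₀ → p ∉ Module.support R₀ (T n)))}.Finite ∧
    {p : PrimeSpectrum R₀ | Order.height p ≤ (3 : ℕ∞) ∧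
        ¬ (∃ n₀ : ℤ, (∀ n : ℤ, n ≤ n₀ → p ∈ Module.support R₀ (T n)) ∨
            (∀ n : ℤ, n ≤ n₀ → p ∉ Module.support R₀ (T n)))} ⊆ C :=
  tameness_fails_only_on_critical_set_general R₀ T nI 𝔓 h𝔓 C hC hCfin
end
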